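/- For M = 2, n = 1, and 0 < μ_1, μ_2 ≤ 1, one has I_1 = ∑_{m=3}^∞ (q_m/m!) s_{(m−2,1)}(μ_1,μ_2) ≤ Aη + B, where q_m = A(1−(1−η)^m) + B. -/

import Mathlib

/-!
A semistandard filling of the hook `(k + 1, 1)` with entries in `{0, 1}` has `0` in the corner and
`1` below it, and its first row is weakly increasing, so it is determined by the number of zeros in
that row, which lies in `[1, k + 1]`. Hence `s_{(k+1,1)}(μ₁, μ₂) ≤ k + 1` when `0 ≤ μᵢ ≤ 1`.
Bernoulli's inequality gives `q m ≤ m (A η + B)`, so the `k`-th term of the series is at most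
`(A η + B) (k + 1) / (k + 2)!`, and these majorants telescope to `A η + B` because
`(k + 1) / (k + 2)! = 1 / (k + 1)! - 1 / (k + 2)!`.
-/

/-- The set of cells of the Young diagram with row lengths given by `lam`. -/
def youngCells (lam : List ℕ) : Finset (ℕ × ℕ) :=
  (Finset.range lam.length).biUnion fun i => {i} ×ˢ Finset.range (lam.getD i 0)

/-- The Schur polynomial `s_lam` in `M` variables, evaluated at `μ`, defined
combinatorially as the sum over semistandard fillings of the diagram `lam`
with entries in `Fin M` of the corresponding monomials. -/
noncomputable def schur (M : ℕ) (μ : Fin M → ℝ) (lam : List ℕ) : ℝ :=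
  ∑ T : youngCells lam → Fin M,
    if (∀ c c' : youngCells lam,
          (c : ℕ × ℕ).1 = (c' : ℕ × ℕ).1 → (c : ℕ × ℕ).2 + 1 = (c' : ℕ × ℕ).2 → T c ≤ T c') ∧
       (∀ c c' : youngCells lam,
          (c : ℕ × ℕ).1 + 1 = (c' : ℕ × ℕ).1 → (c : ℕ × ℕ).2 = (c' : ℕ × ℕ).2 → T c < T c')
    then ∏ c : youngCells lam, μ (T c) else 0

open Finset
open scoped Nat

def IsSemistandard {M : ℕ} {lam : List ℕ} (T : youngCells lam → Fin M) : Prop :=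
  (∀ c c' : youngCells lam,
      (c : ℕ × ℕ).1 = (c' : ℕ × ℕ).1 → (c : ℕ × ℕ).2 + 1 = (c' : ℕ × ℕ).2 → T c ≤ T c') ∧
  (∀ c c' : youngCells lam,
      (c : ℕ × ℕ).1 + 1 = (c' : ℕ × ℕ).1 → (c : ℕ × ℕ).2 = (c' : ℕ × ℕ).2 → T c < T c')

instance {M : ℕ} {lam : List ℕ} : DecidablePred (@IsSemistandard M lam) :=
  fun _ => inferInstanceAs (Decidable (_ ∧ _))

section Schur

variable {M : ℕ} {μ : Fin M → ℝ} {lam : List ℕ}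

lemma schur_eq_sum_semistandard :
    schur M μ lam = ∑ T : youngCells lam → Fin M,
      if IsSemistandard T then ∏ c, μ (T c) else 0 := rfl

lemma schur_nonneg (hμ : ∀ i, 0 ≤ μ i) : 0 ≤ schur M μ lam := by
  rw [schur_eq_sum_semistandard]
  refine sum_nonneg fun T _ => ?_
  split_ifs
  exacts [prod_nonneg fun c _ => hμ _, le_rfl]

lemma schur_le_card_semistandard (hμ0 : ∀ i, 0 ≤ μ i) (hμ1 : ∀ i, μ i ≤ 1) :
    schur M μ lam ≤ #{T : youngCells lam → Fin M | IsSemistandard T} := by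
  rw [schur_eq_sum_semistandard, card_filter, Nat.cast_sum]
  gcongr with T
  split_ifs
  · exact_mod_cast prod_le_one (fun c _ => hμ0 _) fun c _ => hμ1 _
  · simp

end Schur

lemma Monotone.apply_eq_bot_iff_lt_card {α : Type*} [PartialOrder α] [OrderBot α] [DecidableEq α]
    {n : ℕ} {f : Fin n → α} (hf : Monotone f) (i : Fin n) :
    f i = ⊥ ↔ (i : ℕ) < #{j | f j = ⊥} := by
  constructor
  · intro hi
    have : Iic i ⊆ ({j | f j = ⊥} : Finset (Fin n)) := fun j hj =>
      mem_filter.2 ⟨mem_univ _, le_bot_iff.1 (hi ▸ hf (mem_Iic.1 hj))⟩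
    simpa [Fin.card_Iic] using card_le_card this
  · intro hi
    by_contra hne
    have : ({j | f j = ⊥} : Finset (Fin n)) ⊆ Iio i := fun j hj =>
      mem_Iio.2 <| lt_of_not_ge fun hij => hne (le_bot_iff.1 ((mem_filter.1 hj).2 ▸ hf hij))
    exact lt_irrefl _ (hi.trans_le ((card_le_card this).trans_eq (Fin.card_Iio i)))

lemma Fin.two_eq_iff {a b : Fin 2} : a = b ↔ (a = 0 ↔ b = 0) := by
  fin_cases a <;> fin_cases b <;> simp

lemma Fin.two_eq_zero_and_eq_one_of_lt {a b : Fin 2} (h : a < b) : a = 0 ∧ b = 1 := by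
  fin_cases a <;> fin_cases b <;> simp_all

section Hook

variable {k : ℕ}

lemma mem_youngCells_hook {c : ℕ × ℕ} :
    c ∈ youngCells [k + 1, 1] ↔ (c.1 = 0 ∧ c.2 < k + 1) ∨ c = (1, 0) := by
  obtain ⟨i, j⟩ := c
  simp only [youngCells, mem_biUnion, mem_product, mem_range, mem_singleton, List.length_cons,
    List.length_nil, Prod.mk.injEq]
  constructor
  · rintro ⟨i, hi, rfl, hj⟩
    interval_cases i <;> simp_all
  · rintro (⟨rfl, hj⟩ | ⟨rfl, rfl⟩)
    exacts [⟨0, by omega, rfl, hj⟩, ⟨1, by omega, rfl, by simp⟩]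

def armCell (j : Fin (k + 1)) : youngCells [k + 1, 1] :=
  ⟨(0, j), mem_youngCells_hook.2 (.inl ⟨rfl, j.2⟩)⟩

def legCell : youngCells [k + 1, 1] :=
  ⟨(1, 0), mem_youngCells_hook.2 (.inr rfl)⟩

def armZeroCount (T : youngCells [k + 1, 1] → Fin 2) : ℕ :=
  #{j | T (armCell j) = 0}

namespace IsSemistandard

variable {T : youngCells [k + 1, 1] → Fin 2} (hT : IsSemistandard T)
include hT

lemma arm_monotone : Monotone fun j => T (armCell j) :=
  Fin.monotone_iff_le_succ.2 fun _ => hT.1 _ _ rfl rfl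

lemma armCell_zero_and_legCell : T (armCell 0) = 0 ∧ T legCell = 1 :=
  Fin.two_eq_zero_and_eq_one_of_lt (hT.2 (armCell 0) legCell rfl rfl)

lemma armCell_eq_zero_iff (j : Fin (k + 1)) : T (armCell j) = 0 ↔ (j : ℕ) < armZeroCount T :=
  hT.arm_monotone.apply_eq_bot_iff_lt_card j

lemma armZeroCount_mem_Icc : armZeroCount T ∈ Icc 1 (k + 1) := by
  refine mem_Icc.2 ⟨?_, ?_⟩
  · exact (hT.armCell_eq_zero_iff 0).1 hT.armCell_zero_and_legCell.1
  · exact (card_filter_le _ _).trans (by simp)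

end IsSemistandard

lemma IsSemistandard.eq_of_armZeroCount_eq {T T' : youngCells [k + 1, 1] → Fin 2}
    (hT : IsSemistandard T) (hT' : IsSemistandard T') (h : armZeroCount T = armZeroCount T') :
    T = T' := by
  funext ⟨c, hc⟩
  rcases mem_youngCells_hook.1 hc with ⟨hc1, hc2⟩ | rfl
  · have hcell : (⟨c, hc⟩ : youngCells [k + 1, 1]) = armCell ⟨c.2, hc2⟩ :=
      Subtype.ext (Prod.ext hc1 rfl)
    rw [hcell, Fin.two_eq_iff, hT.armCell_eq_zero_iff, hT'.armCell_eq_zero_iff, h]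
  · exact hT.armCell_zero_and_legCell.2.trans hT'.armCell_zero_and_legCell.2.symm

lemma card_semistandard_hook_le :
    #{T : youngCells [k + 1, 1] → Fin 2 | IsSemistandard T} ≤ k + 1 := by
  simpa using card_le_card_of_injOn (t := Icc 1 (k + 1)) armZeroCount
    (fun T hT => IsSemistandard.armZeroCount_mem_Icc (mem_filter.1 hT).2)
    fun T hT T' hT' =>
      IsSemistandard.eq_of_armZeroCount_eq (mem_filter.1 hT).2 (mem_filter.1 hT').2

lemma schur_hook_le {μ : Fin 2 → ℝ} (hμ0 : ∀ i, 0 ≤ μ i) (hμ1 : ∀ i, μ i ≤ 1) :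
    schur 2 μ [k + 1, 1] ≤ k + 1 :=
  (schur_le_card_semistandard hμ0 hμ1).trans (by exact_mod_cast card_semistandard_hook_le)

end Hook

section Series

lemma hasSum_succ_div_factorial_add_two :
    HasSum (fun k : ℕ => ((k : ℝ) + 1) / (k + 2)!) 1 := by
  have hsplit (k : ℕ) : ((k : ℝ) + 1) / (k + 2)! = 1 / (k + 1)! - 1 / (k + 2)! := by
    rw [show k + 2 = k + 1 + 1 by rfl, Nat.factorial_succ (k + 1)]
    push_cast
    field_simp
    ring
  have hexp := NormedSpace.expSeries_div_hasSum_exp (1 : ℝ)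
  simp_rw [hsplit]
  simpa [Finset.sum_range_succ] using
    ((hasSum_nat_add_iff' 1).2 hexp).sub ((hasSum_nat_add_iff' 2).2 hexp)

lemma div_factorial_mul_le {x c s : ℝ} {k : ℕ} (hx0 : 0 ≤ x) (hx : x ≤ ((3 + k : ℕ) : ℝ) * c)
    (hs : s ≤ k + 1) : x / (3 + k)! * s ≤ c * ((k + 1) / (k + 2)!) :=
  calc x / (3 + k)! * s ≤ x / (3 + k)! * (k + 1) := by gcongr
    _ ≤ (3 + k : ℕ) * c / (3 + k)! * (k + 1) := by gcongr
    _ = c * ((k + 1) / (k + 2)!) := by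
      rw [show 3 + k = k + 2 + 1 by ring, Nat.factorial_succ]
      push_cast
      field_simp

end Series

section Weight

variable {A B η : ℝ}

lemma one_sub_pow_le_mul (hη : η ≤ 2) (m : ℕ) : 1 - (1 - η) ^ m ≤ m * η := by
  have := one_add_mul_sub_le_pow (a := 1 - η) (by linarith) m
  linarith

lemma mul_one_sub_one_sub_pow_add_nonneg (hA : 0 ≤ A) (hB : 0 ≤ B) (hη0 : 0 ≤ η) (hη1 : η ≤ 1)
    (m : ℕ) : 0 ≤ A * (1 - (1 - η) ^ m) + B := by
  have : (1 - η) ^ m ≤ 1 := pow_le_one₀ (by linarith) (by linarith)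
  have : 0 ≤ A * (1 - (1 - η) ^ m) := mul_nonneg hA (by linarith)
  linarith

lemma mul_one_sub_one_sub_pow_add_le (hA : 0 ≤ A) (hB : 0 ≤ B) (hη : η ≤ 2) {m : ℕ}
    (hm : 1 ≤ m) : A * (1 - (1 - η) ^ m) + B ≤ m * (A * η + B) := by
  have hAη : A * (1 - (1 - η) ^ m) ≤ A * (m * η) :=
    mul_le_mul_of_nonneg_left (one_sub_pow_le_mul hη m) hA
  have hBm : B ≤ m * B := le_mul_of_one_le_left hB (by exact_mod_cast hm)
  linarith

end Weight

theorem I_one_le_two_decoys_general (μ₁ μ₂ : ℝ) (h1 : 0 < μ₁) (h1' : μ₁ ≤ 1)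
    (h2 : 0 < μ₂) (h2' : μ₂ ≤ 1)
    (A B η : ℝ) (hA0 : 0 ≤ A) (hB0 : 0 ≤ B) (hη0 : 0 ≤ η) (hη1 : η ≤ 1)
    (q : ℕ → ℝ) (hq : ∀ m, q m = A * (1 - (1 - η) ^ m) + B) :
    (Summable fun k : ℕ => q (3 + k) / ((3 + k).factorial : ℝ) *
        schur 2 ![μ₁, μ₂] [k + 1, 1]) ∧
    (∑' k : ℕ, q (3 + k) / ((3 + k).factorial : ℝ) *
        schur 2 ![μ₁, μ₂] [k + 1, 1]) ≤ A * η + B := by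
  have hμ0 : ∀ i, 0 ≤ ![μ₁, μ₂] i := by simp [Fin.forall_fin_two, h1.le, h2.le]
  have hμ1 : ∀ i, ![μ₁, μ₂] i ≤ 1 := by simp [Fin.forall_fin_two, h1', h2']
  have hq0 : ∀ m, 0 ≤ q m := fun m =>
    hq m ▸ mul_one_sub_one_sub_pow_add_nonneg hA0 hB0 hη0 hη1 m
  have hterm0 : ∀ k : ℕ, 0 ≤ q (3 + k) / (3 + k)! * schur 2 ![μ₁, μ₂] [k + 1, 1] := fun k =>
    mul_nonneg (div_nonneg (hq0 _) (by positivity)) (schur_nonneg hμ0)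
  have hterm : ∀ k : ℕ, q (3 + k) / (3 + k)! * schur 2 ![μ₁, μ₂] [k + 1, 1] ≤
      (A * η + B) * ((k + 1) / (k + 2)!) := fun k =>
    div_factorial_mul_le (hq0 _)
      (hq _ ▸ mul_one_sub_one_sub_pow_add_le hA0 hB0 (by linarith) (by omega))
      (schur_hook_le hμ0 hμ1)
  have hmajorant := hasSum_succ_div_factorial_add_two.mul_left (A * η + B)
  have hsummable := Summable.of_nonneg_of_le hterm0 hterm hmajorant.summable
  exact ⟨hsummable, by simpa using hasSum_le hterm hsummable.hasSum hmajorant⟩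

/-- For `M = 2`, `n = 1` and `0 < μ₁, μ₂ ≤ 1`:
`I₁ = ∑_{m=3}^∞ (q m / m!) s_{(m-2,1)}(μ₁,μ₂) ≤ A η + B` (and the series converges). -/
theorem I_one_le_two_decoys (μ₁ μ₂ : ℝ) (h1 : 0 < μ₁) (h1' : μ₁ ≤ 1)
    (h2 : 0 < μ₂) (h2' : μ₂ ≤ 1)
    (A B η : ℝ) (hA0 : 0 ≤ A) (hA1 : A ≤ 1) (hB0 : 0 ≤ B) (hη0 : 0 ≤ η) (hη1 : η ≤ 1)
    (q : ℕ → ℝ) (hq : ∀ m, q m = A * (1 - (1 - η) ^ m) + B) :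
    (Summable fun k : ℕ => q (3 + k) / ((3 + k).factorial : ℝ) *
        schur 2 ![μ₁, μ₂] [k + 1, 1]) ∧
    (∑' k : ℕ, q (3 + k) / ((3 + k).factorial : ℝ) *
        schur 2 ![μ₁, μ₂] [k + 1, 1]) ≤ A * η + B :=
  I_one_le_two_decoys_general μ₁ μ₂ h1 h1' h2 h2' A B η hA0 hB0 hη0 hη1 q hq
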